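/- Let G be a 2-edge-connected finite simple graph and let L = ((u_1, v_1), …, (u_l, v_l)) be an edge DFS of G. Orient each edge e_i = {u_i, v_i} of G from u_i to v_i. Then the resulting orientation of G is strongly connected. -/

import Mathlib

/-- `Xset G L j w` is the set of edges of `G` incident to `w` that are not
among the edges of the first `j + 1` items of `L` (0-based: items `0, …, j`). -/
def Xset {V : Type*} (G : SimpleGraph V) (L : List (V × V)) (j : ℕ) (w : V) :
    Set (Sym2 V) :=
  {e | e ∈ G.edgeSet ∧ w ∈ e ∧
    ∀ i : ℕ, ∀ hi : i < L.length, i ≤ j → e ≠ Sym2.mk.uncurry (L[i]'hi)}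

/-- `L = ((u_0, v_0), …, (u_{l-1}, v_{l-1}))` is an edge DFS of `G`:
(i) each `{u_j, v_j}` is an edge of `G`;
(ii) every edge of `G` occurs as some `{u_j, v_j}`;
(iii) after traversing items `0, …, j`, if some edge incident to `v_j` is still
untraversed then the next item traverses such an edge starting at `v_j`;
otherwise `L` backtracks to the last previously visited vertex `v_{j'}` that
still has an untraversed incident edge and traverses such an edge from it. -/
def IsEdgeDFS {V : Type*} (G : SimpleGraph V) (L : List (V × V)) : Prop :=
  (∀ i : ℕ, ∀ hi : i < L.length, G.Adj (L[i]'hi).1 (L[i]'hi).2) ∧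
  (∀ e ∈ G.edgeSet, ∃ i : ℕ, ∃ hi : i < L.length, e = Sym2.mk.uncurry (L[i]'hi)) ∧
  (∀ j : ℕ, ∀ hj : j + 1 < L.length,
    (Xset G L j (L[j]'(by omega)).2 ≠ ∅ →
      (L[j + 1]'hj).1 = (L[j]'(by omega)).2 ∧
      Sym2.mk.uncurry (L[j + 1]'hj) ∈ Xset G L j (L[j]'(by omega)).2) ∧
    (Xset G L j (L[j]'(by omega)).2 = ∅ →
      ∃ j' : ℕ, ∃ hj' : j' < j,
        Xset G L j (L[j']'(by omega)).2 ≠ ∅ ∧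
        (∀ j'' : ℕ, ∀ _h1 : j' < j'', ∀ _h2 : j'' < j,
          Xset G L j (L[j'']'(by omega)).2 = ∅) ∧
        (L[j + 1]'hj).1 = (L[j']'(by omega)).2 ∧
        Sym2.mk.uncurry (L[j + 1]'hj) ∈ Xset G L j (L[j']'(by omega)).2))

/-- A finite simple graph is 2-edge-connected if it has at least 2 vertices,
is connected, and deleting any single edge leaves it connected. -/
def TwoEdgeConnected {V : Type*} [Fintype V] (G : SimpleGraph V) : Prop :=
  2 ≤ Fintype.card V ∧ G.Connected ∧
    ∀ e ∈ G.edgeSet, (G.deleteEdges {e}).Connected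

/-- The set of vertices not yet visited strictly before step `i`. -/
private def Dset {V : Type*} (L : List (V × V)) (hl0 : 0 < L.length) (i : ℕ) (z : V) : Prop :=
  z ≠ (L[0]'hl0).1 ∧ ∀ i' : ℕ, ∀ hi' : i' < L.length, i' < i → z ≠ (L[i']'hi').2

/-- The set of vertices visited during the interval `[i, K)`. -/
private def Wset {V : Type*} (L : List (V × V)) (i K : ℕ) (z : V) : Prop :=
  ∃ m : ℕ, ∃ hm : m < L.length, i ≤ m ∧ m < K ∧ z = (L[m]'hm).2

private lemma sym2_mem_mk {V : Type*} (p : V × V) (x : V) :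
    x ∈ Sym2.mk.uncurry p ↔ x = p.1 ∨ x = p.2 := by
  cases p with
  | mk a b => exact Sym2.mem_iff

private lemma walk_cross {V : Type*} {H : SimpleGraph V} {W : V → Prop} :
    ∀ {x y : V}, H.Walk x y → W x → ¬ W y → ∃ a b, H.Adj a b ∧ W a ∧ ¬ W b := by
  intro x y w
  induction w with
  | nil => intro hx hy; exact absurd hx hy
  | @cons a b c h p ih =>
    intro hx hy
    by_cases hb : W b
    · exact ih hb hy
    · exact ⟨a, b, h, hx, hb⟩

/-- Every traversed edge except the first starts at a previously visited endpoint. -/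
private lemma aux_origin {V : Type*} {G : SimpleGraph V} {L : List (V × V)}
    (hL : IsEdgeDFS G L) (m : ℕ) (hm : m < L.length) (h1 : 1 ≤ m) :
    ∃ i : ℕ, ∃ hi : i < L.length, i < m ∧ (L[m]'hm).1 = (L[i]'hi).2 := by
  obtain ⟨j, rfl⟩ : ∃ j, m = j + 1 := ⟨m - 1, by omega⟩
  have h3 := hL.2.2 j hm
  by_cases hX : Xset G L j ((L[j]'(by omega)).2) = ∅
  · obtain ⟨j', hj', _, _, hu, _⟩ := h3.2 hX
    exact ⟨j', by omega, by omega, hu⟩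
  · exact ⟨j, by omega, by omega, (h3.1 hX).1⟩

private lemma old_not_D {V : Type*} {G : SimpleGraph V} {L : List (V × V)}
    (hL : IsEdgeDFS G L) (hl0 : 0 < L.length) (i t : ℕ) (ht : t < L.length) (hti : t < i) :
    ¬ Dset L hl0 i ((L[t]'ht).1) ∧ ¬ Dset L hl0 i ((L[t]'ht).2) := by
  constructor
  · intro hd
    rcases Nat.eq_zero_or_pos t with h0 | h1
    · subst h0; exact hd.1 rfl
    · obtain ⟨m, hm, hmt, he⟩ := aux_origin hL t ht h1
      exact hd.2 m hm (by omega) he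
  · intro hd
    exact hd.2 t ht hti rfl

private lemma reach_in_subtree {V : Type*} {G : SimpleGraph V} {L : List (V × V)}
    (hL : IsEdgeDFS G L) (hl0 : 0 < L.length) (i K : ℕ) (hi : i < L.length)
    (hK : ∀ m : ℕ, ∀ hm : m < L.length, i < m → m < K →
      Dset L hl0 i ((L[m]'hm).1) ∧ Dset L hl0 i ((L[m]'hm).2)) :
    ∀ m : ℕ, ∀ hm : m < L.length, i ≤ m → m < K →
      Relation.ReflTransGen (fun a b => (a, b) ∈ L) ((L[i]'hi).2) ((L[m]'hm).2) := by
  intro m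
  induction m using Nat.strong_induction_on with
  | _ m IH =>
    intro hm him hmK
    rcases Nat.eq_or_lt_of_le him with h | h
    · cases h; exact Relation.ReflTransGen.refl
    · obtain ⟨m', hm', hm'm, he⟩ := aux_origin hL m hm (by omega)
      have hDum := (hK m hm h hmK).1
      have him' : i ≤ m' := by
        by_contra hc
        push_neg at hc
        exact (old_not_D hL hl0 i m' hm' hc).2 (he ▸ hDum)
      have h1 := IH m' hm'm hm' him' (by omega)
      refine h1.tail ?_
      have h2 : ((L[m]'hm).1, (L[m]'hm).2) ∈ L := by simp
      rw [he] at h2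
      exact h2

/-- The cut contradiction: if every edge incident to the interval set `W` occurs
before time `K`, then `W` is separated from the rest except by edge `e_i`,
contradicting 2-edge-connectivity. -/
private lemma cut_contra {V : Type*} {G : SimpleGraph V}
    (hG2 : ∀ e ∈ G.edgeSet, (G.deleteEdges {e}).Connected)
    {L : List (V × V)} (hL : IsEdgeDFS G L)
    (hl0 : 0 < L.length) (i K : ℕ) (hi : i < L.length) (hiK : i < K)
    (hfresh : Dset L hl0 i ((L[i]'hi).2))
    (hK : ∀ m : ℕ, ∀ hm : m < L.length, i < m → m < K →
      Dset L hl0 i ((L[m]'hm).1) ∧ Dset L hl0 i ((L[m]'hm).2))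
    (hX : ∀ e ∈ G.edgeSet, ∀ x : V, x ∈ e → Wset L i K x →
      ∃ t : ℕ, ∃ ht : t < L.length, t < K ∧ e = Sym2.mk.uncurry (L[t]'ht)) :
    False := by
  have hWD : ∀ z : V, Wset L i K z → Dset L hl0 i z := by
    rintro z ⟨m, hm, him, hmK, rfl⟩
    rcases Nat.eq_or_lt_of_le him with h | h
    · cases h; exact hfresh
    · exact (hK m hm h hmK).2
  have hWvi : Wset L i K ((L[i]'hi).2) := ⟨i, hi, le_refl i, hiK, rfl⟩
  have hWu : ¬ Wset L i K ((L[i]'hi).1) := by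
    intro hw
    have hd := hWD _ hw
    rcases Nat.eq_zero_or_pos i with h0 | h1
    · subst h0; exact hd.1 rfl
    · obtain ⟨m, hm, hmi, he⟩ := aux_origin hL i hi h1
      exact hd.2 m hm hmi he
  have hadj := hL.1 i hi
  have hedge : Sym2.mk.uncurry (L[i]'hi) ∈ G.edgeSet := by
    rw [show Sym2.mk.uncurry (L[i]'hi) = s((L[i]'hi).1, (L[i]'hi).2) by rfl]
    exact hadj
  obtain ⟨p⟩ := (hG2 _ hedge).preconnected ((L[i]'hi).2) ((L[i]'hi).1)
  obtain ⟨a, b, hab, hWa, hWb⟩ := walk_cross p hWvi hWu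
  rw [SimpleGraph.deleteEdges_adj] at hab
  obtain ⟨hGab, hne⟩ := hab
  rw [Set.mem_singleton_iff] at hne
  obtain ⟨t, ht, htK, hte⟩ := hX s(a, b) (G.mem_edgeSet.2 hGab) a (Sym2.mem_mk_left a b) hWa
  have hti : i ≤ t := by
    by_contra hc
    push_neg at hc
    have ha : a ∈ Sym2.mk.uncurry (L[t]'ht) := hte ▸ Sym2.mem_mk_left a b
    have hda := hWD a hWa
    rcases (sym2_mem_mk _ a).1 ha with h | h
    · exact (old_not_D hL hl0 i t ht hc).1 (h ▸ hda)
    · exact (old_not_D hL hl0 i t ht hc).2 (h ▸ hda)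
  have hti' : i < t := by
    rcases Nat.eq_or_lt_of_le hti with h | h
    · cases h; exact absurd hte hne
    · exact h
  have hb : b ∈ Sym2.mk.uncurry (L[t]'ht) := hte ▸ Sym2.mem_mk_right a b
  rcases (sym2_mem_mk _ b).1 hb with h | h
  · obtain ⟨m', hm', hm't, he⟩ := aux_origin hL t ht (by omega)
    have hDut := (hK t ht hti' htK).1
    have him' : i ≤ m' := by
      by_contra hc
      push_neg at hc
      exact (old_not_D hL hl0 i m' hm' hc).2 (he ▸ hDut)
    exact hWb ⟨m', hm', him', by omega, by rw [h, he]⟩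
  · exact hWb ⟨t, ht, le_of_lt hti', htK, h⟩

/-- If `G` is 2-edge-connected and `L` is an edge DFS of `G`, then orienting
each edge `{u_i, v_i}` from `u_i` to `v_i` yields a strongly connected
orientation: every vertex is reachable from every vertex along directed
edges `(a, b) ∈ L`. -/
theorem edgeDFS_orientation_strongly_connected {V : Type*} [Fintype V]
    (G : SimpleGraph V) (hG : TwoEdgeConnected G) (L : List (V × V))
    (hL : IsEdgeDFS G L) :
    ∀ x y : V, Relation.ReflTransGen (fun a b => (a, b) ∈ L) x y := by
  classical
  obtain ⟨hcard, hconn, hdel⟩ := hG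
  intro x y
  have hadj : ∀ z : V, ∃ w, G.Adj z w := by
    intro z
    obtain ⟨w, hw⟩ := Fintype.exists_ne_of_one_lt_card (by omega) z
    obtain ⟨p⟩ := hconn.preconnected z w
    cases p with
    | nil => exact absurd rfl hw
    | cons h _ => exact ⟨_, h⟩
  have hocc : ∀ z : V, ∃ iz : ℕ, ∃ hiz : iz < L.length,
      z = (L[iz]'hiz).1 ∨ z = (L[iz]'hiz).2 := by
    intro z
    obtain ⟨w, hw⟩ := hadj z
    obtain ⟨iz, hiz, he⟩ := hL.2.1 s(z, w) (G.mem_edgeSet.2 hw)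
    have hz : z ∈ Sym2.mk.uncurry (L[iz]'hiz) := he ▸ Sym2.mem_mk_left z w
    exact ⟨iz, hiz, (sym2_mem_mk _ z).1 hz⟩
  have hl0 : 0 < L.length := by
    obtain ⟨iz, hiz, _⟩ := hocc x
    omega
  have hstep : ∀ j : ℕ, ∀ hj : j < L.length,
      Relation.ReflTransGen (fun a b => (a, b) ∈ L) ((L[j]'hj).1) ((L[j]'hj).2) := by
    intro j hj
    refine Relation.ReflTransGen.single ?_
    simp
  have lemA : ∀ j : ℕ, ∀ hj : j < L.length,
      Relation.ReflTransGen (fun a b => (a, b) ∈ L) ((L[0]'hl0).1) ((L[j]'hj).2) := by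
    intro j
    induction j using Nat.strong_induction_on with
    | _ j IH =>
      intro hj
      refine Relation.ReflTransGen.trans ?_ (hstep j hj)
      rcases Nat.eq_zero_or_pos j with h0 | h1
      · subst h0; exact Relation.ReflTransGen.refl
      · obtain ⟨m, hm, hmj, he⟩ := aux_origin hL j hj h1
        rw [he]
        exact IH m hmj hm
  have lemB : ∀ j : ℕ, ∀ hj : j < L.length,
      Relation.ReflTransGen (fun a b => (a, b) ∈ L) ((L[j]'hj).2) ((L[0]'hl0).1) := by
    intro j
    induction j using Nat.strong_induction_on with
    | _ i IH =>
      intro hi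
      by_cases hfr : (L[i]'hi).2 = (L[0]'hl0).1 ∨
          ∃ i' : ℕ, ∃ hi' : i' < L.length, i' < i ∧ (L[i]'hi).2 = (L[i']'hi').2
      · rcases hfr with h | ⟨i', hi', hlt, he⟩
        · rw [h]
        · rw [he]; exact IH i' hlt hi'
      · push_neg at hfr
        have hDvi : Dset L hl0 i ((L[i]'hi).2) := ⟨hfr.1, hfr.2⟩
        by_cases hex : ∃ k : ℕ, i < k ∧ ∃ hk : k < L.length,
            ¬ Dset L hl0 i ((L[k]'hk).1) ∨ ¬ Dset L hl0 i ((L[k]'hk).2)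
        · obtain ⟨k₀, hspec, hmink⟩ : ∃ k, (i < k ∧ ∃ hk : k < L.length,
              ¬ Dset L hl0 i ((L[k]'hk).1) ∨ ¬ Dset L hl0 i ((L[k]'hk).2)) ∧
              ∀ m, m < k → ¬ (i < m ∧ ∃ hm : m < L.length,
                ¬ Dset L hl0 i ((L[m]'hm).1) ∨ ¬ Dset L hl0 i ((L[m]'hm).2)) :=
            ⟨Nat.find hex, Nat.find_spec hex, fun m hm => Nat.find_min hex hm⟩
          obtain ⟨hik, hkl, hor⟩ := hspec
          have hKmin : ∀ m : ℕ, ∀ hm : m < L.length, i < m → m < k₀ →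
              Dset L hl0 i ((L[m]'hm).1) ∧ Dset L hl0 i ((L[m]'hm).2) := by
            intro m hm him hmk
            have h := hmink m hmk
            push_neg at h
            exact h him hm
          by_cases hu : Dset L hl0 i ((L[k₀]'hkl).1)
          · have hv : ¬ Dset L hl0 i ((L[k₀]'hkl).2) := by
              rcases hor with h | h
              · exact absurd hu h
              · exact h
            obtain ⟨m', hm', hm'k, he⟩ := aux_origin hL k₀ hkl (by omega)
            have him' : i ≤ m' := by
              by_contra hc
              push_neg at hc
              exact (old_not_D hL hl0 i m' hm' hc).2 (he ▸ hu)
            have hreach := reach_in_subtree hL hl0 i k₀ hi hKmin m' hm' him' hm'k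
            have hchain : Relation.ReflTransGen (fun a b => (a, b) ∈ L)
                ((L[i]'hi).2) ((L[k₀]'hkl).2) := by
              refine hreach.tail ?_
              have h2 : ((L[k₀]'hkl).1, (L[k₀]'hkl).2) ∈ L := by simp
              rw [he] at h2
              exact h2
            simp only [Dset] at hv
            push_neg at hv
            by_cases hρ : (L[k₀]'hkl).2 = (L[0]'hl0).1
            · rw [← hρ]; exact hchain
            · obtain ⟨i', hi', hlt, he2⟩ := hv hρ
              refine hchain.trans ?_
              rw [he2]
              exact IH i' hlt hi'
          · exfalso
            obtain ⟨j, rfl⟩ : ∃ j, k₀ = j + 1 := ⟨k₀ - 1, by omega⟩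
            have hclause := hL.2.2 j hkl
            have hij : i ≤ j := by omega
            have hDvj : Dset L hl0 i ((L[j]'(by omega : j < L.length)).2) := by
              rcases Nat.eq_or_lt_of_le hij with h | h
              · cases h; exact hDvi
              · exact (hKmin j (by omega) h (by omega)).2
            have hXj : Xset G L j ((L[j]'(by omega)).2) = ∅ := by
              by_contra hc
              have h1 := (hclause.1 hc).1
              exact hu (by rw [h1]; exact hDvj)
            obtain ⟨j', hj', hne', hbtw, hu', _⟩ := hclause.2 hXj
            have hj'i : j' < i := by
              by_contra hc
              push_neg at hc
              have hDj' : Dset L hl0 i ((L[j']'(by omega : j' < L.length)).2) := by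
                rcases Nat.eq_or_lt_of_le hc with h | h
                · cases h; exact hDvi
                · exact (hKmin j' (by omega) h (by omega)).2
              exact hu (by rw [hu']; exact hDj')
            have hXall : ∀ m : ℕ, ∀ hm : m < L.length, i ≤ m → m ≤ j →
                Xset G L j ((L[m]'hm).2) = ∅ := by
              intro m hm him hmj
              rcases Nat.eq_or_lt_of_le hmj with h | h
              · cases h; exact hXj
              · exact hbtw m (by omega) h
            refine cut_contra hdel hL hl0 i (j + 1) hi (by omega) hDvi hKmin ?_
            rintro e he z hz ⟨m, hm, him, hmK, rfl⟩
            have hXe := hXall m hm him (by omega)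
            rw [Set.eq_empty_iff_forall_notMem] at hXe
            have h2 := hXe e
            simp only [Xset, Set.mem_setOf_eq] at h2
            push_neg at h2
            obtain ⟨t, ht, htj, hte⟩ := h2 he hz
            exact ⟨t, ht, by omega, hte⟩
        · exfalso
          push_neg at hex
          have hKall : ∀ m : ℕ, ∀ hm : m < L.length, i < m → m < L.length →
              Dset L hl0 i ((L[m]'hm).1) ∧ Dset L hl0 i ((L[m]'hm).2) := by
            intro m hm him _
            exact hex m him hm
          refine cut_contra hdel hL hl0 i L.length hi hi hDvi hKall ?_
          rintro e he z hz hW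
          obtain ⟨t, ht, hte⟩ := hL.2.1 e he
          exact ⟨t, ht, ht, hte⟩
  have hx' : Relation.ReflTransGen (fun a b => (a, b) ∈ L) x ((L[0]'hl0).1) := by
    obtain ⟨ix, hix, h | h⟩ := hocc x
    · rcases Nat.eq_zero_or_pos ix with h0 | h1
      · subst h0; rw [h]
      · obtain ⟨m, hm, _, he⟩ := aux_origin hL ix hix h1
        rw [h, he]
        exact lemB m hm
    · rw [h]; exact lemB ix hix
  have hy' : Relation.ReflTransGen (fun a b => (a, b) ∈ L) ((L[0]'hl0).1) y := by
    obtain ⟨iy, hiy, h | h⟩ := hocc y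
    · rcases Nat.eq_zero_or_pos iy with h0 | h1
      · subst h0; rw [h]
      · obtain ⟨m, hm, _, he⟩ := aux_origin hL iy hiy h1
        rw [h, he]
        exact lemA m hm
    · rw [h]; exact lemA iy hiy
  exact hx'.trans hy'
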